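/- arXiv:2306.14844 — 6 statements merged into one kernel-verified Lean document; each statement's English description precedes it below -/
import Mathlib

section
/- Let H be a real Hilbert space, ω the symplectic form ω((x₁,y₁),(x₂,y₂)) = ⟪y₁, x₂⟫ − ⟪y₂, x₁⟫ on H × H, and J(x,y) = −(A x + Δ y, D x − A† y) with Δ, D self-adjoint, A∘A + Δ∘D = −id, A∘Δ = Δ∘A†, A†∘D = D∘A. If Δ is invertible and positive definite (⟪Δx, x⟫ > 0 for all x ≠ 0), then the bilinear form μ(u,v) := ω(u, −J v) on H × H is symmetric and positive definite: μ(u,v) = μ(v,u) for all u, v, and μ(u,u) > 0 for all u ≠ 0. -/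
open ContinuousLinearMap
open scoped RealInnerProductSpace

/-- With `ω` the symplectic form on `H × H` and
`J(x,y) = −(A x + Δ y, D x − A† y)` satisfying the compatibility conditions,
if `Δ` is invertible and positive definite then the bilinear form
`μ(u,v) := ω(u, −J v)` is symmetric and positive definite. -/
theorem stmt2 {H : Type*} [NormedAddCommGroup H] [InnerProductSpace ℝ H]
    [CompleteSpace H] (A Δ D K : H →L[ℝ] H)
    (hΔ : adjoint Δ = Δ) (hD : adjoint D = D)
    (hsq : A ∘L A + Δ ∘L D = -1)
    (hAΔ : A ∘L Δ = Δ ∘L (adjoint A))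
    (hAD : (adjoint A) ∘L D = D ∘L A)
    (hK₁ : Δ ∘L K = 1) (hK₂ : K ∘L Δ = 1)
    (hpos : ∀ x : H, x ≠ 0 → 0 < ⟪Δ x, x⟫)
    (ω : H × H → H × H → ℝ)
    (hω : ∀ u v : H × H, ω u v = ⟪u.2, v.1⟫ - ⟪v.2, u.1⟫)
    (J : H × H → H × H)
    (hJ : ∀ u : H × H, J u = -(A u.1 + Δ u.2, D u.1 - (adjoint A) u.2))
    (μ : H × H → H × H → ℝ)
    (hμ : ∀ u v : H × H, μ u v = ω u (-(J v))) :
    (∀ u v : H × H, μ u v = μ v u) ∧ (∀ u : H × H, u ≠ 0 → 0 < μ u u) := by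
  -- pointwise versions of operator identities
  have hΔK : ∀ x : H, Δ (K x) = x := fun x => congrFun (congrArg DFunLike.coe hK₁) x
  have hKΔ : ∀ x : H, K (Δ x) = x := fun x => congrFun (congrArg DFunLike.coe hK₂) x
  have hsq' : ∀ x : H, A (A x) + Δ (D x) = -x := fun x => by
    have := congrFun (congrArg DFunLike.coe hsq) x
    simpa using this
  have hAΔ' : ∀ x : H, A (Δ x) = Δ (adjoint A x) := fun x =>
    congrFun (congrArg DFunLike.coe hAΔ) x
  -- adjoint facts as inner product identities
  have hΔi : ∀ x y : H, ⟪Δ x, y⟫ = ⟪x, Δ y⟫ := fun x y => by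
    conv_lhs => rw [← hΔ]
    rw [adjoint_inner_left]
  have hDi : ∀ x y : H, ⟪D x, y⟫ = ⟪x, D y⟫ := fun x y => by
    conv_lhs => rw [← hD]
    rw [adjoint_inner_left]
  -- A† ∘ K = K ∘ A
  have hA'K : ∀ x : H, adjoint A (K x) = K (A x) := fun x => by
    have h := hAΔ' (K x)
    rw [hΔK] at h
    have := congrArg K h
    rw [hKΔ] at this
    exact this.symm
  -- expanded formula for μ
  have key : ∀ u v : H × H,
      μ u v = ⟪u.2, A v.1⟫ + ⟪u.2, Δ v.2⟫ - ⟪D v.1, u.1⟫ + ⟪adjoint A v.2, u.1⟫ := by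
    intro u v
    rw [hμ, hJ, hω, neg_neg]
    simp [inner_add_right, inner_sub_left]
    ring
  constructor
  · intro u v
    rw [key, key]
    have h1 : ⟪u.2, A v.1⟫ = ⟪adjoint A u.2, v.1⟫ := (adjoint_inner_left A v.1 u.2).symm
    have h2 : ⟪u.2, Δ v.2⟫ = ⟪v.2, Δ u.2⟫ := by
      rw [← hΔi, real_inner_comm]
    have h3 : ⟪D v.1, u.1⟫ = ⟪v.1, D u.1⟫ := hDi v.1 u.1
    have h4 : ⟪adjoint A v.2, u.1⟫ = ⟪v.2, A u.1⟫ := adjoint_inner_left A u.1 v.2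
    rw [h1, h2, h3, h4]
    linarith [real_inner_comm ((adjoint A) u.2) v.1, real_inner_comm v.1 (D u.1)]
  · intro u hu
    -- μ u u = ⟪Δ w, w⟫ + ⟪K u.1, u.1⟫ with w = u.2 + K (A u.1)
    set w := u.2 + K (A u.1) with hw
    have hKpos : ∀ x : H, x ≠ 0 → 0 < ⟪K x, x⟫ := by
      intro x hx
      have hKx : K x ≠ 0 := by
        intro h
        apply hx
        rw [← hΔK x, h, map_zero]
      have heq : ⟪K x, x⟫ = ⟪Δ (K x), K x⟫ := by
        nth_rewrite 2 [← hΔK x]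
        exact real_inner_comm (Δ (K x)) (K x)
      rw [heq]
      exact hpos _ hKx
    have hmain : μ u u = ⟪Δ w, w⟫ + ⟪K u.1, u.1⟫ := by
      rw [key, hw]
      have e1 : ⟪Δ (u.2 + K (A u.1)), u.2 + K (A u.1)⟫ =
          ⟪Δ u.2, u.2⟫ + ⟪Δ u.2, K (A u.1)⟫ + ⟪A u.1, u.2⟫ + ⟪A u.1, K (A u.1)⟫ := by
        rw [map_add, inner_add_left, inner_add_right, inner_add_right, hΔK]
        ring
      have e2 : ⟪Δ u.2, K (A u.1)⟫ = ⟪u.2, A u.1⟫ := by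
        rw [hΔi, hΔK]
      have e3 : ⟪adjoint A u.2, u.1⟫ = ⟪u.2, A u.1⟫ := adjoint_inner_left A u.1 u.2
      have e4 : ⟪D u.1, u.1⟫ = -⟪u.1, K u.1⟫ - ⟪A u.1, K (A u.1)⟫ := by
        have h1 : ⟪D u.1, u.1⟫ = ⟪Δ (D u.1), K u.1⟫ := by
          nth_rewrite 2 [← hΔK u.1]
          rw [← hΔi]
        have h2 : Δ (D u.1) = -u.1 - A (A u.1) := by
          rw [eq_sub_iff_add_eq, add_comm]
          exact hsq' u.1
        rw [h1, h2, inner_sub_left, inner_neg_left]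
        have h3 : ⟪A (A u.1), K u.1⟫ = ⟪A u.1, K (A u.1)⟫ := by
          rw [← adjoint_inner_right A (A u.1) (K u.1), hA'K]
        rw [h3]
      rw [e1, e2, e3, e4]
      linarith [real_inner_comm u.2 (Δ u.2), real_inner_comm u.2 (A u.1),
        real_inner_comm u.1 (K u.1)]
    rw [hmain]
    rcases eq_or_ne u.1 0 with h1 | h1
    · have h2 : u.2 ≠ 0 := by
        intro h2
        exact hu (Prod.ext h1 h2)
      have hwne : w ≠ 0 := by
        rw [hw, h1, map_zero, map_zero, add_zero]
        exact h2
      have h3 := hpos w hwne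
      have hKnn : 0 ≤ ⟪K u.1, u.1⟫ := by
        rw [h1]; simp
      linarith
    · have h2 := hKpos u.1 h1
      have hwnn : 0 ≤ ⟪Δ w, w⟫ := by
        rcases eq_or_ne w 0 with h | h
        · rw [h]; simp
        · exact (hpos w h).le
      linarith
end

section
/- Let H be a real Hilbert space and A, Δ, D continuous linear operators on H with Δ, D self-adjoint, A∘A + Δ∘D = −id, A∘Δ = Δ∘A†, A†∘D = D∘A, and Δ invertible with inverse K. Define T : H × H → H × H by T(x,y) = (x, A x + Δ y), J(x,y) = −(A x + Δ y, D x − A† y), and J₀(u,v) = (−v, u). Then T is a continuous linear bijection with inverse T⁻¹(u,v) = (u, K(v − A u)), and T ∘ J ∘ T⁻¹ = J₀. -/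
open ContinuousLinearMap
open scoped RealInnerProductSpace

/-- With the compatibility conditions on `A, Δ, D` and `K = Δ⁻¹`,
the coordinate change `T(x,y) = (x, A x + Δ y)` (a continuous linear map on
`H × H`) is a bijection with inverse `T⁻¹(u,v) = (u, K(v − A u))`, and it
conjugates `J(x,y) = −(A x + Δ y, D x − A† y)` into the canonical complex
structure `J₀(u,v) = (−v, u)`: `T ∘ J ∘ T⁻¹ = J₀`. -/
theorem stmt3 {H : Type*} [NormedAddCommGroup H] [InnerProductSpace ℝ H]
    [CompleteSpace H] (A Δ D K : H →L[ℝ] H)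
    (hΔ : adjoint Δ = Δ) (hD : adjoint D = D)
    (hsq : A ∘L A + Δ ∘L D = -1)
    (hAΔ : A ∘L Δ = Δ ∘L (adjoint A))
    (hAD : (adjoint A) ∘L D = D ∘L A)
    (hK₁ : Δ ∘L K = 1) (hK₂ : K ∘L Δ = 1)
    (T : H × H →L[ℝ] H × H)
    (hT : ∀ p : H × H, T p = (p.1, A p.1 + Δ p.2))
    (Tinv : H × H → H × H)
    (hTinv : ∀ p : H × H, Tinv p = (p.1, K (p.2 - A p.1)))
    (J : H × H → H × H)
    (hJ : ∀ u : H × H, J u = -(A u.1 + Δ u.2, D u.1 - (adjoint A) u.2))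
    (J₀ : H × H → H × H)
    (hJ₀ : ∀ p : H × H, J₀ p = (-p.2, p.1)) :
    Function.Bijective T ∧ (∀ p : H × H, Tinv (T p) = p) ∧
      (∀ p : H × H, T (Tinv p) = p) ∧
      (∀ p : H × H, T (J (Tinv p)) = J₀ p) := by

  have hKΔ : ∀ x : H, K (Δ x) = x := fun x => by
    have := DFunLike.congr_fun hK₂ x; simpa using this
  have hΔK : ∀ x : H, Δ (K x) = x := fun x => by
    have := DFunLike.congr_fun hK₁ x; simpa using this
  have hsq' : ∀ x : H, A (A x) + Δ (D x) = -x := fun x => by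
    have := DFunLike.congr_fun hsq x; simpa using this
  have hAΔ' : ∀ x : H, A (Δ x) = Δ ((adjoint A) x) := fun x => by
    have := DFunLike.congr_fun hAΔ x; simpa using this
  have hleft : ∀ p : H × H, Tinv (T p) = p := by
    intro p
    rw [hT, hTinv]
    simp [hKΔ]
  have hright : ∀ p : H × H, T (Tinv p) = p := by
    intro p
    rw [hTinv, hT]
    simp [hΔK]
  refine ⟨⟨Function.LeftInverse.injective hleft,
    Function.RightInverse.surjective hright⟩, hleft, hright, ?_⟩
  intro p
  obtain ⟨u, v⟩ := p
  rw [hTinv, hJ, hT, hJ₀]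
  simp only [Prod.fst_neg, Prod.snd_neg, map_neg]
  have h1 : A u + Δ (K (v - A u)) = v := by
    simp [map_sub, hΔK]
  have h2 : -(A (A u + Δ (K (v - A u)))) +
      Δ (-(D u - (adjoint A) (K (v - A u)))) = u := by
    rw [h1]
    have : Δ ((adjoint A) (K (v - A u))) = A (v - A u) := by
      rw [← hAΔ', hΔK]
    have h3 : Δ (D u) = -u - A (A u) := by
      have := hsq' u; rw [← this]; abel
    rw [map_neg, map_sub, this, h3]
    simp only [map_sub]
    abel
  refine Prod.ext ?_ ?_
  · simpa using congrArg Neg.neg h1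
  · simpa using h2
end

section
/- Let H be a real Hilbert space and A, Δ, D continuous linear operators on H with Δ, D self-adjoint, A∘A + Δ∘D = −id, A∘Δ = Δ∘A†, A†∘D = D∘A, and Δ invertible with inverse K. Let ω((x₁,y₁),(x₂,y₂)) = ⟪y₁, x₂⟫ − ⟪y₂, x₁⟫, J(x,y) = −(A x + Δ y, D x − A† y), μ(u,v) = ω(u, −J v), and T(x,y) = (x, A x + Δ y). Then for all (u₁,v₁), (u₂,v₂) ∈ H × H, μ(T⁻¹(u₁,v₁), T⁻¹(u₂,v₂)) = ⟪K u₁, u₂⟫ + ⟪K v₁, v₂⟫. -/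
open ContinuousLinearMap
open scoped RealInnerProductSpace

/-- With the compatibility conditions on `A, Δ, D` and `K = Δ⁻¹`,
the induced (pseudo-)Riemannian form `μ(u,v) = ω(u, −J v)` takes, in the new
coordinates given by `T(x,y) = (x, A x + Δ y)` (with inverse
`T⁻¹(u,v) = (u, K(v − A u))`), the canonical form
`μ(T⁻¹(u₁,v₁), T⁻¹(u₂,v₂)) = ⟪K u₁, u₂⟫ + ⟪K v₁, v₂⟫`. -/
theorem stmt5 {H : Type*} [NormedAddCommGroup H] [InnerProductSpace ℝ H]
    [CompleteSpace H] (A Δ D K : H →L[ℝ] H)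
    (hΔ : adjoint Δ = Δ) (hD : adjoint D = D)
    (hsq : A ∘L A + Δ ∘L D = -1)
    (hAΔ : A ∘L Δ = Δ ∘L (adjoint A))
    (hAD : (adjoint A) ∘L D = D ∘L A)
    (hK₁ : Δ ∘L K = 1) (hK₂ : K ∘L Δ = 1)
    (ω : H × H → H × H → ℝ)
    (hω : ∀ u v : H × H, ω u v = ⟪u.2, v.1⟫ - ⟪v.2, u.1⟫)
    (J : H × H → H × H)
    (hJ : ∀ u : H × H, J u = -(A u.1 + Δ u.2, D u.1 - (adjoint A) u.2))
    (μ : H × H → H × H → ℝ)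
    (hμ : ∀ u v : H × H, μ u v = ω u (-(J v)))
    (Tinv : H × H → H × H)
    (hTinv : ∀ p : H × H, Tinv p = (p.1, K (p.2 - A p.1))) :
    ∀ p q : H × H, μ (Tinv p) (Tinv q) = ⟪K p.1, q.1⟫ + ⟪K p.2, q.2⟫ := by
  have hΔK : ∀ x : H, Δ (K x) = x := fun x => by
    have := DFunLike.congr_fun hK₁ x; simpa using this
  have hKΔ : ∀ x : H, K (Δ x) = x := fun x => by
    have := DFunLike.congr_fun hK₂ x; simpa using this
  have hKA' : ∀ x : H, K (A x) = adjoint A (K x) := fun x => by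
    have h := DFunLike.congr_fun hAΔ (K x)
    simp only [comp_apply, hΔK] at h
    rw [h, hKΔ]
  have hsum' : ∀ x : H, D x + adjoint A (K (A x)) = -K x := fun x => by
    have h := DFunLike.congr_fun hsq x
    simp only [add_apply, comp_apply, neg_apply, one_apply] at h
    have h2 := congrArg K h
    simp only [map_add, map_neg, hKΔ, hKA'] at h2
    simp only [hKA']
    rw [add_comm]; exact h2
  have hΔinner : ∀ x y : H, ⟪Δ x, y⟫ = ⟪x, Δ y⟫ := fun x y => by
    rw [← hΔ, adjoint_inner_left, hΔ]
  have hKinner : ∀ x y : H, ⟪K x, y⟫ = ⟪x, K y⟫ := fun x y => by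
    calc ⟪K x, y⟫ = ⟪K x, Δ (K y)⟫ := by rw [hΔK]
      _ = ⟪Δ (K x), K y⟫ := (hΔinner _ _).symm
      _ = ⟪x, K y⟫ := by rw [hΔK]
  intro p q
  rw [hμ, hTinv, hTinv, hJ, hω]
  simp only [neg_neg, map_sub, hΔK]
  have e1 : ⟪adjoint A (K q.2 - K (A q.1)), p.1⟫
      = ⟪K q.2, A p.1⟫ - ⟪K (A q.1), A p.1⟫ := by
    rw [adjoint_inner_left, inner_sub_left]
  have e2 : ⟪K q.2, A p.1⟫ = ⟪K (A p.1), q.2⟫ :=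
    calc ⟪K q.2, A p.1⟫ = ⟪q.2, K (A p.1)⟫ := hKinner _ _
      _ = ⟪K (A p.1), q.2⟫ := real_inner_comm _ _
  have e3 : ⟪D q.1, p.1⟫ + ⟪K (A q.1), A p.1⟫ = - ⟪K q.1, p.1⟫ := by
    have := hsum' q.1
    have h4 : ⟪D q.1 + adjoint A (K (A q.1)), p.1⟫ = ⟪-K q.1, p.1⟫ := by rw [this]
    rw [inner_add_left, inner_neg_left, adjoint_inner_left] at h4
    linarith
  have e4 : ⟪K q.1, p.1⟫ = ⟪K p.1, q.1⟫ := by rw [hKinner, real_inner_comm]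
  have hq : A q.1 + (q.2 - A q.1) = q.2 := by abel
  simp only [hq, map_sub, inner_sub_left, inner_sub_right, adjoint_inner_left]
  linarith [e2, e3, e4]
end

section
/- The complex linear span of the trigonometric exponentials {x ↦ exp(i·ξ·x) | ξ ∈ ℝ} is dense in the complex Hilbert space L²(ℝ, γ₁; ℂ), where γ₁ is the standard Gaussian probability measure on ℝ. (This instantiates the claim that the algebra of trigonometric exponentials 𝒯 is dense in the Gaussian L² space.) -/
open MeasureTheory ProbabilityTheory Complex

open Set Filter Topology
open scoped ENNReal NNReal Real

/-!
Approximate `f` in `Lᵖ` by a continuous, compactly supported `g`. For large `T`, `g` vanishes at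
`±T`, so it descends to a continuous function on the circle `ℝ ⧸ 2Tℤ`, where Fourier polynomials
are uniformly dense. Pulled back to `ℝ`, such a polynomial is a trigonometric sum that is uniformly
close to `g` on `[-T, T)` and bounded on all of `ℝ` by a constant independent of `T`; since
`μ [-T, T)ᶜ → 0`, the `Lᵖ` error off `[-T, T)` is small as well.
-/

noncomputable def trigSum {n : ℕ} (c : Fin n → ℂ) (ξ : Fin n → ℝ) (x : ℝ) : ℂ :=
  ∑ i, c i * exp (I * ξ i * x)

@[fun_prop]
lemma continuous_trigSum {n : ℕ} (c : Fin n → ℂ) (ξ : Fin n → ℝ) : Continuous (trigSum c ξ) := by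
  unfold trigSum; fun_prop

lemma AddCircle.exists_trigSum_norm_sub_lt {T : ℝ} [Fact (0 < T)] (G : C(AddCircle T, ℂ))
    {δ : ℝ} (hδ : 0 < δ) :
    ∃ (n : ℕ) (c : Fin n → ℂ) (ξ : Fin n → ℝ), ∀ x : ℝ, ‖G x - trigSum c ξ x‖ < δ := by
  have hdense : Dense (Submodule.span ℂ (range (@fourier T)) : Set C(AddCircle T, ℂ)) :=
    Submodule.dense_iff_topologicalClosure_eq_top.2 span_fourier_closure_eq_top
  obtain ⟨P, hP, hGP⟩ := hdense.exists_dist_lt G hδ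
  obtain ⟨n, c, v, rfl⟩ := Submodule.mem_span_set'.1 hP
  choose m hm using fun i => (v i).2
  -- `fourier m` pulls back to `ℝ` as the exponential of frequency `2πm/T`
  refine ⟨n, c, fun i => 2 * π * m i / T, fun x => ?_⟩
  have hPx : (∑ i, c i • (v i : C(AddCircle T, ℂ))) x = trigSum c (fun i => 2 * π * m i / T) x := by
    simp only [ContinuousMap.coe_sum, Finset.sum_apply, ContinuousMap.smul_apply, smul_eq_mul,
      trigSum, ← hm, fourier_coe_apply]
    refine Finset.sum_congr rfl fun i _ => ?_
    push_cast
    ring_nf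
  rw [← hPx, ← dist_eq_norm]
  exact (ContinuousMap.dist_apply_le_dist _).trans_lt hGP

lemma exists_trigSum_norm_sub_lt_on_Ico {g : ℝ → ℂ} (hg : Continuous g) {T M δ : ℝ} (hT : 0 < T)
    (hgT : g (-T) = g T) (hM : ∀ x, ‖g x‖ ≤ M) (hδ : 0 < δ) :
    ∃ (n : ℕ) (c : Fin n → ℂ) (ξ : Fin n → ℝ),
      (∀ x ∈ Ico (-T) T, ‖g x - trigSum c ξ x‖ < δ) ∧ ∀ x, ‖trigSum c ξ x‖ < M + δ := by
  have : Fact (0 < 2 * T) := ⟨by positivity⟩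
  have hTT : -T + 2 * T = T := by ring
  let G : C(AddCircle (2 * T), ℂ) :=
    ⟨AddCircle.liftIco (2 * T) (-T) g, AddCircle.liftIco_continuous (by rwa [hTT]) hg.continuousOn⟩
  obtain ⟨n, c, ξ, hGF⟩ := AddCircle.exists_trigSum_norm_sub_lt G hδ
  refine ⟨n, c, ξ, fun x hx => ?_, fun x => ?_⟩
  · have hGx : G x = g x := AddCircle.liftIco_coe_apply (by rwa [hTT])
    simpa [hGx] using hGF x
  · calc ‖trigSum c ξ x‖ ≤ ‖G x‖ + ‖G x - trigSum c ξ x‖ := norm_le_insert _ _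
      -- every value of `liftIco` is a value of `g`
      _ < M + δ := add_lt_add_of_le_of_lt (hM _) (hGF x)

lemma tendsto_measure_compl_Ico_atTop (μ : Measure ℝ) [IsFiniteMeasure μ] :
    Tendsto (fun T : ℝ => μ (Ico (-T) T)ᶜ) atTop (𝓝 0) := by
  have hanti : Antitone fun T : ℝ => (Ico (-T) T)ᶜ := fun S T hST =>
    compl_subset_compl.2 (Ico_subset_Ico (neg_le_neg hST) hST)
  have hempty : ⋂ T : ℝ, (Ico (-T) T)ᶜ = ∅ := by
    refine eq_empty_of_forall_notMem fun x hx => ?_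
    have := mem_iInter.1 hx (|x| + 1)
    simp only [mem_compl_iff, mem_Ico, not_and_or, not_le, not_lt] at this
    cases this <;> cases abs_lt.1 (lt_add_one |x|) <;> linarith [le_abs_self x, neg_abs_le x]
  simpa [Function.comp_def, hempty] using tendsto_measure_iInter_atTop
    (fun T => measurableSet_Ico.compl.nullMeasurableSet) hanti ⟨0, measure_ne_top μ _⟩

lemma eLpNorm_le_of_norm_le_on {α E : Type*} [MeasurableSpace α] [NormedAddCommGroup E]
    {μ : Measure α} {p : ℝ≥0∞} (hp : 1 ≤ p) {h : α → E} (hh : AEStronglyMeasurable h μ)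
    {s : Set α} (hs : MeasurableSet s) {δ C : ℝ} (hδ : ∀ x ∈ s, ‖h x‖ ≤ δ) (hC : ∀ x, ‖h x‖ ≤ C) :
    eLpNorm h p μ ≤
      μ univ ^ p.toReal⁻¹ * ENNReal.ofReal δ + μ sᶜ ^ p.toReal⁻¹ * ENNReal.ofReal C := by
  rw [← s.indicator_self_add_compl h]
  refine (eLpNorm_add_le (hh.indicator hs) (hh.indicator hs.compl) hp).trans (add_le_add ?_ ?_)
  · rw [eLpNorm_indicator_eq_eLpNorm_restrict hs]
    refine (eLpNorm_le_of_ae_bound (ae_restrict_of_forall_mem hs hδ)).trans ?_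
    rw [Measure.restrict_apply_univ]
    gcongr
    exact subset_univ s
  · rw [eLpNorm_indicator_eq_eLpNorm_restrict hs.compl]
    refine (eLpNorm_le_of_ae_bound (ae_restrict_of_forall_mem hs.compl fun x _ => hC x)).trans ?_
    rw [Measure.restrict_apply_univ]

lemma HasCompactSupport.eventually_apply_neg_eq_apply {β : Type*} [Zero β] {g : ℝ → β}
    (hg : HasCompactSupport g) : ∀ᶠ T in atTop, g (-T) = g T := by
  obtain ⟨R, hR⟩ := hg.isCompact.isBounded.subset_closedBall 0
  filter_upwards [eventually_gt_atTop R] with T hT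
  have hout : ∀ x, R < |x| → g x = 0 := fun x hx =>
    image_eq_zero_of_notMem_tsupport fun h => by
      have := hR h
      rw [Metric.mem_closedBall, dist_zero_right, Real.norm_eq_abs] at this
      linarith
  have hT0 : R < |T| := hT.trans_le (le_abs_self T)
  rw [hout T hT0, hout (-T) (by rwa [abs_neg])]

theorem MeasureTheory.MemLp.exists_trigSum_eLpNorm_sub_lt {μ : Measure ℝ} [IsFiniteMeasure μ]
    {p : ℝ≥0∞} (hp1 : 1 ≤ p) (hp : p ≠ ∞) {f : ℝ → ℂ} (hf : MemLp f p μ) {ε : ℝ} (hε : 0 < ε) :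
    ∃ (n : ℕ) (c : Fin n → ℂ) (ξ : Fin n → ℝ),
      eLpNorm (fun x => f x - trigSum c ξ x) p μ < ENNReal.ofReal ε := by
  have hε2 : ENNReal.ofReal (ε / 2) ≠ 0 := by simpa using hε
  have hε4 : (0 : ℝ≥0∞) < ENNReal.ofReal (ε / 4) := by simpa using hε
  obtain ⟨g, g_supp, hfg, g_cont, -⟩ := hf.exists_hasCompactSupport_eLpNorm_sub_le hp hε2
  obtain ⟨M, hM⟩ := g_cont.bounded_above_of_compact_support g_supp
  have hp0 : 0 < p.toReal⁻¹ := inv_pos.2 (ENNReal.toReal_pos (by positivity) hp)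
  obtain ⟨δ, hδ, hδε⟩ := ENNReal.exists_nnreal_pos_mul_lt
    (ENNReal.rpow_ne_top_of_nonneg hp0.le (measure_ne_top μ univ)) hε4.ne'
  have htail : Tendsto (fun T : ℝ => μ (Ico (-T) T)ᶜ ^ p.toReal⁻¹ * ENNReal.ofReal (M + (M + δ)))
      atTop (𝓝 0) := by
    have hrpow : Tendsto (fun T : ℝ => μ (Ico (-T) T)ᶜ ^ p.toReal⁻¹) atTop (𝓝 0) := by
      rw [← ENNReal.zero_rpow_of_pos hp0]
      exact ((ENNReal.continuous_rpow_const (y := p.toReal⁻¹)).tendsto 0).comp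
          (tendsto_measure_compl_Ico_atTop μ)
    simpa using ENNReal.Tendsto.mul_const hrpow (Or.inr ENNReal.ofReal_ne_top)
  obtain ⟨T, hgT, hT, hTε⟩ := (g_supp.eventually_apply_neg_eq_apply.and
    ((eventually_gt_atTop 0).and (htail.eventually (gt_mem_nhds hε4)))).exists
  obtain ⟨n, c, ξ, hgF, hF⟩ :=
    exists_trigSum_norm_sub_lt_on_Ico g_cont hT hgT hM (NNReal.coe_pos.2 hδ)
  refine ⟨n, c, ξ, ?_⟩
  have hsplit : (fun x => f x - trigSum c ξ x) = (f - g) + fun x => g x - trigSum c ξ x := by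
    ext x; simp
  have hgF_meas : AEStronglyMeasurable (fun x => g x - trigSum c ξ x) μ := by
    fun_prop
  calc eLpNorm (fun x => f x - trigSum c ξ x) p μ
      ≤ eLpNorm (f - g) p μ + eLpNorm (fun x => g x - trigSum c ξ x) p μ := by
        rw [hsplit]
        exact eLpNorm_add_le (hf.1.sub g_cont.aestronglyMeasurable) hgF_meas hp1
    _ ≤ ENNReal.ofReal (ε / 2) + (μ univ ^ p.toReal⁻¹ * ENNReal.ofReal δ
          + μ (Ico (-T) T)ᶜ ^ p.toReal⁻¹ * ENNReal.ofReal (M + (M + δ))) := by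
        refine add_le_add hfg (eLpNorm_le_of_norm_le_on hp1 hgF_meas measurableSet_Ico
          (fun x hx => (hgF x hx).le) fun x => ?_)
        exact (norm_sub_le _ _).trans (add_le_add (hM x) (hF x).le)
    _ < ENNReal.ofReal (ε / 2) + (ENNReal.ofReal (ε / 4) + ENNReal.ofReal (ε / 4)) := by
        gcongr
        · exact ENNReal.ofReal_ne_top
        · simpa [mul_comm] using hδε
    _ = ENNReal.ofReal ε := by
        rw [← ENNReal.ofReal_add (by positivity) (by positivity),
          ← ENNReal.ofReal_add (by positivity) (by positivity)]
        ring_nf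

/-- The complex linear span of the trigonometric exponentials
`x ↦ exp(i·ξ·x)`, `ξ ∈ ℝ`, is dense in `L²(ℝ, γ₁; ℂ)` for the standard
Gaussian probability measure `γ₁`: every `f ∈ L²(γ₁; ℂ)` is approximated in
`L²`-norm by finite linear combinations of trigonometric exponentials. -/
theorem stmt9 (f : ℝ → ℂ) (hf : MemLp f 2 (gaussianReal 0 1))
    (ε : ℝ) (hε : 0 < ε) :
    ∃ (n : ℕ) (c : Fin n → ℂ) (ξ : Fin n → ℝ),
      eLpNorm (fun x : ℝ => f x - ∑ i, c i * Complex.exp (Complex.I * (ξ i : ℂ) * (x : ℂ)))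
        2 (gaussianReal 0 1) < ENNReal.ofReal ε :=
  hf.exists_trigSum_eLpNorm_sub_lt one_le_two ENNReal.ofNat_ne_top hε
end

section
/- For every n ∈ ℕ and every x ∈ ℝ, ∫ (x − i·y)ⁿ dγ₁(y) = He_n(x), where the integral is over y ∈ ℝ with respect to the standard Gaussian measure γ₁, the integrand takes values in ℂ, and He_n(x) is the value at x of the n-th probabilists' Hermite polynomial. (This is the explicit computation defining the Segal–Bargmann transform: integrating a holomorphic monomial over the imaginary degrees of freedom yields the Wick monomial.) -/
/-!
Gaussian integration by parts, `∫ y g(y) dγ₁ = ∫ g'(y) dγ₁`, applied to `g(y) = (x - iy)^(n+1)`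
turns `I_n(x) = ∫ (x - iy)^n dγ₁` into a sequence with `I_{n+2} = x I_{n+1} - (n+1) I_n`.
Since `He_{n+1}' = (n+1) He_n`, the defining recursion `He_{n+1} = X He_n - He_n'` is the same
three-term recurrence, and both sequences start with `1, x`.
-/

open MeasureTheory ProbabilityTheory Polynomial
open scoped NNReal

namespace Polynomial

theorem derivative_hermite_succ (n : ℕ) :
    derivative (hermite (n + 1)) = (n + 1 : ℤ[X]) * hermite n := by
  induction n with
  | zero => simp
  | succ n ih =>
    have ih' : derivative (derivative (hermite (n + 1))) =
        (n + 1 : ℤ[X]) * derivative (hermite n) := by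
      rw [ih, derivative_mul]; simp
    rw [hermite_succ (n + 1), derivative_sub, derivative_mul, derivative_X, ih', ih]
    push_cast
    linear_combination (-(n + 1 : ℤ[X])) * hermite_succ n

theorem hermite_succ_succ (n : ℕ) :
    hermite (n + 2) = X * hermite (n + 1) - (n + 1 : ℤ[X]) * hermite n := by
  rw [hermite_succ (n + 1), derivative_hermite_succ]

theorem aeval_hermite_succ_succ {R : Type*} [CommRing R] (x : R) (n : ℕ) :
    aeval x (hermite (n + 2)) = x * aeval x (hermite (n + 1)) - (n + 1) * aeval x (hermite n) := by
  simp only [hermite_succ_succ, map_sub, map_mul, aeval_X, map_add, map_natCast, map_one]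

end Polynomial

namespace ProbabilityTheory

variable {μ : ℝ} {v : ℝ≥0}

lemma hasDerivAt_gaussianPDFReal (μ : ℝ) (v : ℝ≥0) (y : ℝ) :
    HasDerivAt (gaussianPDFReal μ v) (-((y - μ) / v) * gaussianPDFReal μ v y) y := by
  have h : HasDerivAt (fun y => -(y - μ) ^ 2 / (2 * v)) (-(2 * (y - μ)) / (2 * v)) y := by
    simpa using (((hasDerivAt_id y).sub_const μ).pow 2).neg.div_const (2 * (v : ℝ))
  rw [gaussianPDFReal_def]
  refine (h.exp.const_mul (√(2 * Real.pi * v))⁻¹).congr_deriv ?_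
  ring

lemma integrable_gaussianReal_iff {E : Type*} [NormedAddCommGroup E] [NormedSpace ℝ E]
    {f : ℝ → E} (hv : v ≠ 0) :
    Integrable f (gaussianReal μ v) ↔ Integrable (fun y => gaussianPDFReal μ v y • f y) := by
  rw [gaussianReal_of_var_ne_zero _ hv, integrable_withDensity_iff_integrable_smul'
    (measurable_gaussianPDF μ v) (ae_of_all _ fun _ => gaussianPDF_lt_top)]
  simp only [toReal_gaussianPDF]

/-- Stein's lemma. -/
theorem integral_sub_smul_gaussianReal {E : Type*} [NormedAddCommGroup E] [NormedSpace ℝ E]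
    {g g' : ℝ → E} (hg : ∀ y, HasDerivAt g (g' y) y) (hg_int : Integrable g (gaussianReal μ v))
    (hyg_int : Integrable (fun y => (y - μ) • g y) (gaussianReal μ v))
    (hg'_int : Integrable g' (gaussianReal μ v)) :
    ∫ y, (y - μ) • g y ∂gaussianReal μ v = (v : ℝ) • ∫ y, g' y ∂gaussianReal μ v := by
  rcases eq_or_ne v 0 with rfl | hv
  · rw [gaussianReal_zero_var, NNReal.coe_zero, zero_smul]
    exact integral_eq_zero_of_ae ((ae_eq_dirac _).trans (.of_eq (by simp)))
  rw [integrable_gaussianReal_iff hv] at hg_int hyg_int hg'_int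
  have h_deriv_smul : ∀ y, (-((y - μ) / v) * gaussianPDFReal μ v y) • g y =
      -((v : ℝ)⁻¹ • gaussianPDFReal μ v y • (y - μ) • g y) := by
    intro y
    rw [smul_smul, smul_smul, ← neg_smul]
    ring_nf
  have ibp := integral_bilinear_hasDerivAt_right_eq_neg_left_of_integrable
    (L := ContinuousLinearMap.lsmul ℝ ℝ) (u := gaussianPDFReal μ v) (v := g)
    (fun y _ => hasDerivAt_gaussianPDFReal μ v y) (fun y _ => hg y) hg'_int
    ((hyg_int.smul (v : ℝ)⁻¹).neg.congr (ae_of_all _ fun y => (h_deriv_smul y).symm)) hg_int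
  simp only [ContinuousLinearMap.lsmul_apply, h_deriv_smul, integral_neg, integral_smul,
    neg_neg] at ibp
  rw [integral_gaussianReal_eq_integral_smul hv, integral_gaussianReal_eq_integral_smul hv, ibp,
    smul_inv_smul₀ (by exact_mod_cast hv)]

lemma integrable_pow_gaussianReal (k : ℕ) : Integrable (fun y : ℝ => y ^ k) (gaussianReal μ v) :=
  (integrable_norm_iff (by fun_prop)).1 <| by
    simpa using (memLp_id_gaussianReal (μ := μ) (v := v) k).integrable_norm_pow'

lemma integrable_eval_gaussianReal (p : ℂ[X]) :
    Integrable (fun y : ℝ => p.eval (y : ℂ)) (gaussianReal μ v) := by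
  induction p using Polynomial.induction_on' with
  | add p q hp hq =>
    simp only [eval_add]
    exact hp.add hq
  | monomial k a => simpa using ((integrable_pow_gaussianReal k).ofReal (𝕜 := ℂ)).const_mul a

end ProbabilityTheory

section SegalBargmann

open Complex

variable {μ : ℝ} {v : ℝ≥0}

lemma integral_sub_I_mul_gaussianReal (x : ℝ) :
    ∫ y, ((x : ℂ) - I * y) ∂gaussianReal μ v = x - I * μ := by
  have h_mean : ∫ y : ℝ, (y : ℂ) ∂gaussianReal μ v = μ := by
    rw [integral_complex_ofReal (f := fun y => y), integral_id_gaussianReal]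
  rw [integral_sub (integrable_const _)
    ((memLp_id_gaussianReal 1).integrable le_rfl |>.ofReal.const_mul _), integral_const_mul, h_mean]
  simp

lemma integrable_sub_I_mul_pow_gaussianReal (x : ℝ) (n : ℕ) :
    Integrable (fun y : ℝ => ((x : ℂ) - I * y) ^ n) (gaussianReal μ v) := by
  have h := integrable_eval_gaussianReal (μ := μ) (v := v) ((C (x : ℂ) - C I * X) ^ n)
  simp only [eval_pow, eval_sub, eval_mul, eval_C, eval_X] at h
  exact h

lemma integrable_mul_sub_I_mul_pow_gaussianReal (x : ℝ) (n : ℕ) :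
    Integrable (fun y : ℝ => (y : ℂ) * ((x : ℂ) - I * y) ^ n) (gaussianReal μ v) := by
  have h := integrable_eval_gaussianReal (μ := μ) (v := v) (X * (C (x : ℂ) - C I * X) ^ n)
  simp only [eval_pow, eval_sub, eval_mul, eval_C, eval_X] at h
  exact h

theorem integral_mul_sub_I_mul_pow_succ_gaussianReal (x : ℝ) (n : ℕ) :
    ∫ y, (y : ℂ) * ((x : ℂ) - I * y) ^ (n + 1) ∂gaussianReal 0 1 =
      -I * (n + 1) * ∫ y, ((x : ℂ) - I * y) ^ n ∂gaussianReal 0 1 := by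
  have hderiv (y : ℝ) : HasDerivAt (fun y : ℝ => ((x : ℂ) - I * y) ^ (n + 1))
      ((n + 1) * ((x : ℂ) - I * y) ^ n * -I) y := by
    have h : HasDerivAt (fun y : ℝ => (x : ℂ) - I * y) (-I) y := by
      simpa using ((hasDerivAt_id y).ofReal_comp.const_mul I).const_sub (x : ℂ)
    simpa using h.fun_pow (n + 1)
  have stein := integral_sub_smul_gaussianReal (μ := 0) (v := 1) hderiv
    (integrable_sub_I_mul_pow_gaussianReal x (n + 1))
    (by simpa using integrable_mul_sub_I_mul_pow_gaussianReal x (n + 1))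
    ((integrable_sub_I_mul_pow_gaussianReal x n).const_mul _ |>.mul_const _)
  simp only [sub_zero, real_smul, NNReal.coe_one, one_smul] at stein
  rw [stein, ← integral_const_mul]
  congr 1 with y
  ring

theorem integral_sub_I_mul_pow_succ_succ_gaussianReal (x : ℝ) (n : ℕ) :
    ∫ y, ((x : ℂ) - I * y) ^ (n + 2) ∂gaussianReal 0 1 =
      x * ∫ y, ((x : ℂ) - I * y) ^ (n + 1) ∂gaussianReal 0 1 -
        (n + 1) * ∫ y, ((x : ℂ) - I * y) ^ n ∂gaussianReal 0 1 := by
  have hsplit : (fun y : ℝ => ((x : ℂ) - I * y) ^ (n + 2)) =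
      fun y : ℝ =>
        x * ((x : ℂ) - I * y) ^ (n + 1) - I * ((y : ℂ) * ((x : ℂ) - I * y) ^ (n + 1)) := by
    ext y; ring
  rw [hsplit, integral_sub ((integrable_sub_I_mul_pow_gaussianReal x _).const_mul _)
    ((integrable_mul_sub_I_mul_pow_gaussianReal x _).const_mul _), integral_const_mul,
    integral_const_mul, integral_mul_sub_I_mul_pow_succ_gaussianReal]
  generalize ∫ y, ((x : ℂ) - I * y) ^ n ∂gaussianReal 0 1 = B
  linear_combination ((n : ℂ) + 1) * B * I_sq

end SegalBargmann

/-- For every `n ∈ ℕ` and `x ∈ ℝ`,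
`∫ (x − i·y)ⁿ dγ₁(y) = He_n(x)`, where the integral over `y ∈ ℝ` is with
respect to the standard Gaussian measure `γ₁` and `He_n` is the `n`-th
probabilists' Hermite polynomial (integrating the holomorphic monomial over
the imaginary degrees of freedom yields the Wick monomial: the
Segal–Bargmann transform). -/
theorem stmt10 (n : ℕ) (x : ℝ) :
    ∫ y : ℝ, ((x : ℂ) - Complex.I * (y : ℂ)) ^ n ∂(gaussianReal 0 1) =
      Polynomial.aeval (x : ℂ) (Polynomial.hermite n) := by
  induction n using Nat.twoStepInduction with
  | zero => simp
  | one => simpa using integral_sub_I_mul_gaussianReal (μ := 0) (v := 1) x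
  | more n ih₀ ih₁ =>
    rw [integral_sub_I_mul_pow_succ_succ_gaussianReal, aeval_hermite_succ_succ, ih₀, ih₁]
end

section
/- For every complex polynomial p and every χ ∈ ℂ, (1/π)·∫_ℂ exp(conj(χ·z))·p(z)·exp(−|z|²) dVol(z) = p(conj χ), where the integral is with respect to the Lebesgue (volume) measure on ℂ. (This is the reproducing-kernel property ⟨Ψ, 𝒦_χ⟩ = Ψ(Δχ) of the holomorphic Gaussian L² space, in the one-dimensional case with unit covariance.) -/
/-!
With `z = x + iy`, the generating integral `∫ exp (μ z̄ + w z - |z|²)` splits into two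
one-dimensional Gaussian integrals and equals `π exp (μ w)`. Differentiating `n` times in `w`
under the integral sign, which is legitimate because `|z|ⁿ exp (c |z| - |z|²)` is integrable,
gives `∫ zⁿ exp (μ z̄ + w z - |z|²) = π μⁿ exp (μ w)`. By linearity `p(z)` integrates to
`π p(μ)`, and `μ = χ̄`, `w = 0` is the theorem.
-/

open MeasureTheory Complex ComplexConjugate
open scoped Nat Real

theorem Real.pow_mul_exp_mul_sub_sq_le {x : ℝ} (hx : 0 ≤ x) (n : ℕ) (a : ℝ) :
    x ^ n * Real.exp (a * x - x ^ 2) ≤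
      n ! * Real.exp ((a + 1) ^ 2 / 2) * Real.exp (-(1 / 2) * x ^ 2) := by
  have hpow : x ^ n ≤ n ! * Real.exp x := by
    have := Real.pow_div_factorial_le_exp (x := x) hx n
    rwa [div_le_iff₀' (by positivity)] at this
  calc x ^ n * Real.exp (a * x - x ^ 2)
      ≤ n ! * Real.exp x * Real.exp (a * x - x ^ 2) := by gcongr
    _ = n ! * Real.exp ((a + 1) * x - x ^ 2) := by
      rw [mul_assoc, ← Real.exp_add]; ring_nf
    _ ≤ n ! * Real.exp ((a + 1) ^ 2 / 2 + -(1 / 2) * x ^ 2) := by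
      gcongr; nlinarith [sq_nonneg (a + 1 - x)]
    _ = _ := by rw [Real.exp_add, mul_assoc]

section InnerProductSpace

variable {V : Type*} [NormedAddCommGroup V] [InnerProductSpace ℝ V] [FiniteDimensional ℝ V]
  [MeasurableSpace V] [BorelSpace V]

theorem integrable_exp_neg_half_mul_sq_norm :
    Integrable (fun v : V => Real.exp (-(1 / 2) * ‖v‖ ^ 2)) := by
  have h := GaussianFourier.integrable_cexp_neg_mul_sq_norm_add (V := V) (b := 1 / 2)
    (by norm_num) 0 0
  simpa [Complex.norm_exp, ← Complex.ofReal_pow] using h.norm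

theorem integrable_norm_pow_mul_exp_mul_norm_sub_sq (n : ℕ) (a : ℝ) :
    Integrable (fun v : V => ‖v‖ ^ n * Real.exp (a * ‖v‖ - ‖v‖ ^ 2)) :=
  (integrable_exp_neg_half_mul_sq_norm.const_mul (n ! * Real.exp ((a + 1) ^ 2 / 2))).mono'
    (by fun_prop) (Filter.Eventually.of_forall fun v => by
      rw [Real.norm_of_nonneg (by positivity)]
      exact Real.pow_mul_exp_mul_sub_sq_le (norm_nonneg v) n a)

end InnerProductSpace

theorem norm_pow_mul_cexp_le (μ w z : ℂ) (n : ℕ) :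
    ‖z ^ n * cexp (μ * conj z + w * z - (‖z‖ : ℂ) ^ 2)‖ ≤
      ‖z‖ ^ n * Real.exp ((‖μ‖ + ‖w‖) * ‖z‖ - ‖z‖ ^ 2) := by
  rw [norm_mul, norm_pow, norm_exp]
  gcongr
  have hμ : (μ * conj z).re ≤ ‖μ‖ * ‖z‖ := by
    simpa using re_le_norm (μ * conj z)
  have hw : (w * z).re ≤ ‖w‖ * ‖z‖ := by
    simpa using re_le_norm (w * z)
  simp only [sub_re, add_re, ← ofReal_pow, ofReal_re]
  linarith

theorem integral_cexp_mul_conj_add_mul_sub_sq (μ w : ℂ) :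
    ∫ z : ℂ, cexp (μ * conj z + w * z - (‖z‖ : ℂ) ^ 2) = π * cexp (μ * w) := by
  rw [← volume_preserving_equiv_pi.symm.integral_comp']
  -- `μ z̄ + w z = (μ + w) x + i (w - μ) y` for `z = x + i y`
  have hexp (p : Fin 2 → ℝ) :
      μ * conj (measurableEquivPi.symm p) + w * measurableEquivPi.symm p -
          (‖measurableEquivPi.symm p‖ : ℂ) ^ 2 =
        -1 * ∑ i, (p i : ℂ) ^ 2 + ∑ i, ![μ + w, I * (w - μ)] i * p i := by
    have hnorm : (‖measurableEquivPi.symm p‖ : ℂ) ^ 2 = (p 0 : ℂ) ^ 2 + (p 1 : ℂ) ^ 2 := by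
      rw [measurableEquivPi_symm_apply, ← ofReal_pow, Complex.sq_norm, normSq_add_mul_I]
      push_cast; ring
    rw [hnorm, measurableEquivPi_symm_apply]
    simp only [Fin.sum_univ_two, map_add, map_mul, conj_ofReal, conj_I, Matrix.cons_val_zero,
      Matrix.cons_val_one]
    ring_nf
  simp_rw [hexp, GaussianFourier.integral_cexp_neg_mul_sum_add (b := 1) (by norm_num)]
  have hsum : (∑ i, ![μ + w, I * (w - μ)] i ^ 2) / (4 * 1) = μ * w := by
    simp only [Fin.sum_univ_two, Matrix.cons_val_zero, Matrix.cons_val_one]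
    linear_combination (w - μ) ^ 2 / 4 * I_sq
  rw [hsum, Fintype.card_fin, div_one, Nat.cast_ofNat, div_self two_ne_zero, cpow_one]

theorem integrable_pow_mul_cexp (μ w : ℂ) (n : ℕ) :
    Integrable (fun z : ℂ => z ^ n * cexp (μ * conj z + w * z - (‖z‖ : ℂ) ^ 2)) :=
  (integrable_norm_pow_mul_exp_mul_norm_sub_sq n (‖μ‖ + ‖w‖)).mono' (by fun_prop)
    (ae_of_all _ (norm_pow_mul_cexp_le μ w · n))

noncomputable def gaussianMoment (μ w : ℂ) (n : ℕ) : ℂ :=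
  ∫ z : ℂ, z ^ n * cexp (μ * conj z + w * z - (‖z‖ : ℂ) ^ 2)

theorem hasDerivAt_gaussianMoment (μ w₀ : ℂ) (n : ℕ) :
    HasDerivAt (gaussianMoment μ · n) (gaussianMoment μ w₀ (n + 1)) w₀ := by
  refine (hasDerivAt_integral_of_dominated_loc_of_deriv_le (Metric.ball_mem_nhds w₀ one_pos)
    (F' := fun w z => z ^ (n + 1) * cexp (μ * conj z + w * z - (‖z‖ : ℂ) ^ 2))
    (Filter.Eventually.of_forall fun w => (integrable_pow_mul_cexp μ w n).aestronglyMeasurable)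
    (integrable_pow_mul_cexp μ w₀ n) (integrable_pow_mul_cexp μ w₀ (n + 1)).aestronglyMeasurable
    (bound := fun z : ℂ => ‖z‖ ^ (n + 1) * Real.exp ((‖μ‖ + (‖w₀‖ + 1)) * ‖z‖ - ‖z‖ ^ 2))
    (ae_of_all _ fun z w hw => ?_) (integrable_norm_pow_mul_exp_mul_norm_sub_sq _ _)
    (ae_of_all _ fun z w _ => ?_)).2
  · have hw : ‖w‖ ≤ ‖w₀‖ + 1 := by
      have := norm_le_norm_add_norm_sub' w w₀
      rw [Metric.mem_ball, dist_eq_norm] at hw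
      linarith
    refine (norm_pow_mul_cexp_le μ w z (n + 1)).trans ?_
    gcongr
  · have hexp : HasDerivAt (fun w => μ * conj z + w * z - (‖z‖ : ℂ) ^ 2) z w := by
      simpa using (((hasDerivAt_id w).mul_const z).const_add (μ * conj z)).sub_const
        ((‖z‖ : ℂ) ^ 2)
    exact (hexp.cexp.const_mul (z ^ n)).congr_deriv (by ring)

theorem gaussianMoment_zero (μ w : ℂ) : gaussianMoment μ w 0 = π * cexp (μ * w) := by
  simpa [gaussianMoment] using integral_cexp_mul_conj_add_mul_sub_sq μ w

theorem gaussianMoment_eq (μ w : ℂ) (n : ℕ) :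
    gaussianMoment μ w n = π * μ ^ n * cexp (μ * w) := by
  induction n generalizing w with
  | zero => simpa using gaussianMoment_zero μ w
  | succ n ih =>
    have hderiv : HasDerivAt (gaussianMoment μ · n) (π * μ ^ n * (cexp (μ * w) * μ)) w := by
      simp only [ih]
      simpa using ((hasDerivAt_id w).const_mul μ).cexp.const_mul (π * μ ^ n)
    rw [(hasDerivAt_gaussianMoment μ w n).unique hderiv]
    ring

theorem integral_eval_mul_cexp_mul_conj_add_mul_sub_sq (p : Polynomial ℂ) (μ w : ℂ) :
    ∫ z : ℂ, p.eval z * cexp (μ * conj z + w * z - (‖z‖ : ℂ) ^ 2) =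
      π * p.eval μ * cexp (μ * w) := by
  simp_rw [Polynomial.eval_eq_sum_range, Finset.sum_mul, mul_assoc]
  rw [integral_finsetSum _ fun i _ => (integrable_pow_mul_cexp μ w i).const_mul (p.coeff i)]
  have hmoment (i : ℕ) : ∫ z : ℂ, z ^ i * cexp (μ * conj z + w * z - (‖z‖ : ℂ) ^ 2) =
      π * μ ^ i * cexp (μ * w) :=
    gaussianMoment_eq μ w i
  simp_rw [integral_const_mul, hmoment, Finset.sum_mul, Finset.mul_sum]
  exact Finset.sum_congr rfl fun i _ => by ring

/-- Reproducing-kernel property of the holomorphic Gaussian `L²`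
space (one-dimensional case, unit covariance): for every complex polynomial
`p` and every `χ ∈ ℂ`,
`(1/π)·∫_ℂ exp(conj(χ·z))·p(z)·exp(−|z|²) dVol(z) = p(conj χ)`. -/
theorem stmt17 (p : Polynomial ℂ) (χ : ℂ) :
    (1 / (Real.pi : ℂ)) *
        ∫ z : ℂ, Complex.exp ((starRingEnd ℂ) (χ * z)) * p.eval z *
          Complex.exp (-(‖z‖ : ℂ) ^ 2) =
      p.eval ((starRingEnd ℂ) χ) := by
  have hintegrand (z : ℂ) : cexp (conj (χ * z)) * p.eval z * cexp (-(‖z‖ : ℂ) ^ 2) =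
      p.eval z * cexp (conj χ * conj z + 0 * z - (‖z‖ : ℂ) ^ 2) := by
    rw [zero_mul, add_zero, sub_eq_add_neg, exp_add, map_mul]
    ring
  simp_rw [hintegrand, integral_eval_mul_cexp_mul_conj_add_mul_sub_sq, mul_zero, exp_zero]
  field_simp
end
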